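/- Let A and B be ¬-reduced diversified ¬∧∨-formulas such that A ↔ B is a tautology. Then no letter p occurs positively in A (outside the scope of ¬) and negatively in B (inside the scope of ¬), and vice versa. -/
import Mathlib


inductive Form where
  | var : ℕ → Form
  | top : Form
  | bot : Form
  | neg : Form → Form
  | and : Form → Form → Form
  | or  : Form → Form → Form
deriving DecidableEq

namespace Form

def eval (v : ℕ → Bool) : Form → Bool
  | var n => v n
  | top => true
  | bot => false
  | neg A => !(A.eval v)
  | and A B => A.eval v && B.eval v
  | or A B => A.eval v || B.eval v

def letters : Form → Multiset ℕ
  | var n => {n}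
  | top => 0
  | bot => 0
  | neg A => A.letters
  | and A B => A.letters + B.letters
  | or A B => A.letters + B.letters

end Form

/-- `A ↔ B` is a tautology. -/
def TautEquiv (A B : Form) : Prop := ∀ v : ℕ → Bool, A.eval v = B.eval v

/-- `A` is a tautology. -/
def Taut (A : Form) : Prop := ∀ v : ℕ → Bool, A.eval v = true

/-- every letter occurs at most once -/
def Diversified (A : Form) : Prop := A.letters.Nodup

/-- built from letters using only ∧ and ∨ -/
def IsAndOr : Form → Prop
  | .var _ => True
  | .and A B => IsAndOr A ∧ IsAndOr B
  | .or A B => IsAndOr A ∧ IsAndOr B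
  | _ => False

/-- ¬ occurs only immediately before letters -/
def NegReduced : Form → Prop
  | .neg (.var _) => True
  | .neg _ => False
  | .and A B => NegReduced A ∧ NegReduced B
  | .or A B => NegReduced A ∧ NegReduced B
  | _ => True

/-- built from letters using only ¬, ∧ and ∨ -/
def IsNAO : Form → Prop
  | .var _ => True
  | .neg A => IsNAO A
  | .and A B => IsNAO A ∧ IsNAO B
  | .or A B => IsNAO A ∧ IsNAO B
  | _ => False

mutual
/-- positive letter occurrences -/
def posL : Form → Multiset ℕ
  | .var n => {n}
  | .top => 0
  | .bot => 0
  | .neg A => negL A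
  | .and A B => posL A + posL B
  | .or A B => posL A + posL B
/-- negative letter occurrences -/
def negL : Form → Multiset ℕ
  | .var _ => 0
  | .top => 0
  | .bot => 0
  | .neg A => posL A
  | .and A B => negL A + negL B
  | .or A B => negL A + negL B
end

open Form

lemma letters_eq (A : Form) : A.letters = posL A + negL A := by
  induction A with
  | var n => simp [Form.letters, posL, negL]
  | top => simp [Form.letters, posL, negL]
  | bot => simp [Form.letters, posL, negL]
  | neg A ih => simp [Form.letters, posL, negL, ih, add_comm]
  | and A B ihA ihB =>
      simp [Form.letters, posL, negL, ihA, ihB]; abel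
  | or A B ihA ihB =>
      simp [Form.letters, posL, negL, ihA, ihB]; abel

lemma eval_congr (A : Form) : ∀ v w : ℕ → Bool,
    (∀ x ∈ A.letters, v x = w x) → A.eval v = A.eval w := by
  induction A with
  | var n => intro v w h; exact h n (by simp [Form.letters])
  | top => intro v w h; rfl
  | bot => intro v w h; rfl
  | neg A ih => intro v w h; simp [Form.eval, ih v w h]
  | and A B ihA ihB =>
      intro v w h
      simp [Form.eval, ihA v w (fun x hx => h x (by simp [Form.letters, hx])),
        ihB v w (fun x hx => h x (by simp [Form.letters, hx]))]
  | or A B ihA ihB =>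
      intro v w h
      simp [Form.eval, ihA v w (fun x hx => h x (by simp [Form.letters, hx])),
        ihB v w (fun x hx => h x (by simp [Form.letters, hx]))]

lemma mono (p : ℕ) (A : Form) :
    (p ∉ negL A → ∀ v, A.eval (Function.update v p false) ≤ A.eval (Function.update v p true)) ∧
    (p ∉ posL A → ∀ v, A.eval (Function.update v p true) ≤ A.eval (Function.update v p false)) := by
  induction A with
  | var n =>
      constructor
      · intro _ v
        simp only [Form.eval]
        by_cases h : n = p <;> simp [Function.update, h]
      · intro hp v
        have : n ≠ p := by rintro rfl; exact hp (by simp [posL])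
        simp [Form.eval, Function.update, this]
  | top => exact ⟨fun _ v => le_refl _, fun _ v => le_refl _⟩
  | bot => exact ⟨fun _ v => le_refl _, fun _ v => le_refl _⟩
  | neg A ih =>
      constructor
      · intro hp v
        have := ih.2 (by simpa [negL] using hp) v
        simp only [Form.eval]
        cases hft : A.eval (Function.update v p false) <;>
          cases htt : A.eval (Function.update v p true) <;>
          simp_all
      · intro hp v
        have := ih.1 (by simpa [posL] using hp) v
        simp only [Form.eval]
        cases hft : A.eval (Function.update v p false) <;>
          cases htt : A.eval (Function.update v p true) <;>
          simp_all
  | and A B ihA ihB =>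
      constructor
      · intro hp v
        have hA := ihA.1 (fun hx => hp (by simp [negL, hx])) v
        have hB := ihB.1 (fun hx => hp (by simp [negL, hx])) v
        simp only [Form.eval]
        revert hA hB; cases A.eval (Function.update v p false) <;> cases A.eval (Function.update v p true) <;> cases B.eval (Function.update v p false) <;> cases B.eval (Function.update v p true) <;> simp_all
      · intro hp v
        have hA := ihA.2 (fun hx => hp (by simp [posL, hx])) v
        have hB := ihB.2 (fun hx => hp (by simp [posL, hx])) v
        simp only [Form.eval]
        revert hA hB; cases A.eval (Function.update v p false) <;> cases A.eval (Function.update v p true) <;> cases B.eval (Function.update v p false) <;> cases B.eval (Function.update v p true) <;> simp_all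
  | or A B ihA ihB =>
      constructor
      · intro hp v
        have hA := ihA.1 (fun hx => hp (by simp [negL, hx])) v
        have hB := ihB.1 (fun hx => hp (by simp [negL, hx])) v
        simp only [Form.eval]
        revert hA hB; cases A.eval (Function.update v p false) <;> cases A.eval (Function.update v p true) <;> cases B.eval (Function.update v p false) <;> cases B.eval (Function.update v p true) <;> simp_all
      · intro hp v
        have hA := ihA.2 (fun hx => hp (by simp [posL, hx])) v
        have hB := ihB.2 (fun hx => hp (by simp [posL, hx])) v
        simp only [Form.eval]
        revert hA hB; cases A.eval (Function.update v p false) <;> cases A.eval (Function.update v p true) <;> cases B.eval (Function.update v p false) <;> cases B.eval (Function.update v p true) <;> simp_all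

lemma div_and_left {A B : Form} (h : Diversified (Form.and A B)) :
    Diversified A ∧ Diversified B ∧ Disjoint A.letters B.letters := by
  have := h
  rw [Diversified, Form.letters, Multiset.nodup_add] at this
  exact this

lemma div_or_left {A B : Form} (h : Diversified (Form.or A B)) :
    Diversified A ∧ Diversified B ∧ Disjoint A.letters B.letters := by
  have := h
  rw [Diversified, Form.letters, Multiset.nodup_add] at this
  exact this

lemma existsEval (A : Form) (hA : IsNAO A) (hnr : NegReduced A) (hd : Diversified A)
    (b : Bool) : ∃ v : ℕ → Bool, A.eval v = b := by
  induction A with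
  | var n => exact ⟨fun _ => b, rfl⟩
  | top => exact absurd hA (by simp [IsNAO])
  | bot => exact absurd hA (by simp [IsNAO])
  | neg A ih =>
      match A, hnr with
      | Form.var n, _ => exact ⟨fun _ => !b, by simp [Form.eval]⟩
  | and A B ihA ihB =>
      obtain ⟨hdA, hdB, hdis⟩ := div_and_left hd
      cases b with
      | false =>
          obtain ⟨v, hv⟩ := ihA hA.1 hnr.1 hdA
          exact ⟨v, by simp [Form.eval, hv]⟩
      | true =>
          obtain ⟨v, hv⟩ := ihA hA.1 hnr.1 hdA
          obtain ⟨w, hw⟩ := ihB hA.2 hnr.2 hdB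
          classical
          refine ⟨fun x => if x ∈ A.letters then v x else w x, ?_⟩
          have h1 : A.eval (fun x => if x ∈ A.letters then v x else w x) = true := by
            rw [eval_congr A _ v (fun x hx => by simp [hx])]; exact hv
          have h2 : B.eval (fun x => if x ∈ A.letters then v x else w x) = true := by
            rw [eval_congr B _ w (fun x hx => by simp [Multiset.disjoint_left.mp hdis.symm hx])]; exact hw
          simp [Form.eval, h1, h2]
  | or A B ihA ihB =>
      obtain ⟨hdA, hdB, hdis⟩ := div_or_left hd
      cases b with
      | true =>
          obtain ⟨v, hv⟩ := ihA hA.1 hnr.1 hdA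
          exact ⟨v, by simp [Form.eval, hv]⟩
      | false =>
          obtain ⟨v, hv⟩ := ihA hA.1 hnr.1 hdA
          obtain ⟨w, hw⟩ := ihB hA.2 hnr.2 hdB
          classical
          refine ⟨fun x => if x ∈ A.letters then v x else w x, ?_⟩
          have h1 : A.eval (fun x => if x ∈ A.letters then v x else w x) = false := by
            rw [eval_congr A _ v (fun x hx => by simp [hx])]; exact hv
          have h2 : B.eval (fun x => if x ∈ A.letters then v x else w x) = false := by
            rw [eval_congr B _ w (fun x hx => by simp [Multiset.disjoint_left.mp hdis.symm hx])]; exact hw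
          simp [Form.eval, h1, h2]

lemma letters_update_congr (A : Form) (p : ℕ) (hp : p ∉ A.letters) (u v : ℕ → Bool)
    (huv : ∀ x ∈ A.letters, u x = v x) (b : Bool) :
    A.eval (Function.update u p b) = A.eval v := by
  apply eval_congr
  intro x hx
  have : x ≠ p := fun h => hp (h ▸ hx)
  rw [Function.update_of_ne this]
  exact huv x hx

lemma relevant (A : Form) (hA : IsNAO A) (hnr : NegReduced A) (hd : Diversified A)
    (p : ℕ) (hp : p ∈ A.letters) :
    ∃ v : ℕ → Bool, A.eval (Function.update v p false) ≠ A.eval (Function.update v p true) := by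
  classical
  induction A with
  | var n =>
      have : p = n := by simpa [Form.letters] using hp
      subst this
      exact ⟨fun _ => true, by simp [Form.eval]⟩
  | top => simp [Form.letters] at hp
  | bot => simp [Form.letters] at hp
  | neg A ih =>
      match A, hnr, hp with
      | Form.var n, _, hp =>
          have : p = n := by simpa [Form.letters] using hp
          subst this
          exact ⟨fun _ => true, by simp [Form.eval]⟩
  | and A B ihA ihB =>
      obtain ⟨hdA, hdB, hdis⟩ := div_and_left hd
      rw [Form.letters, Multiset.mem_add] at hp
      cases hp with
      | inl hp =>
          obtain ⟨v, hv⟩ := ihA hA.1 hnr.1 hdA hp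
          obtain ⟨w, hw⟩ := existsEval B hA.2 hnr.2 hdB true
          have hpB : p ∉ B.letters := Multiset.disjoint_left.mp hdis hp
          refine ⟨fun x => if x ∈ B.letters then w x else v x, ?_⟩
          have hB : ∀ b : Bool,
              B.eval (Function.update (fun x => if x ∈ B.letters then w x else v x) p b) = true := by
            intro b
            rw [letters_update_congr B p hpB _ w (fun x hx => by simp [hx])]
            exact hw
          have hAe : ∀ b : Bool,
              A.eval (Function.update (fun x => if x ∈ B.letters then w x else v x) p b)
                = A.eval (Function.update v p b) := by
            intro b
            apply eval_congr
            intro x hx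
            by_cases hxp : x = p
            · subst hxp; simp
            · have : x ∉ B.letters := Multiset.disjoint_left.mp hdis hx
              simp [Function.update_of_ne hxp, this]
          simp only [Form.eval, hB, hAe, Bool.and_true]
          exact hv
      | inr hp =>
          obtain ⟨v, hv⟩ := ihB hA.2 hnr.2 hdB hp
          obtain ⟨w, hw⟩ := existsEval A hA.1 hnr.1 hdA true
          have hpA : p ∉ A.letters := Multiset.disjoint_left.mp hdis.symm hp
          refine ⟨fun x => if x ∈ A.letters then w x else v x, ?_⟩
          have hAe : ∀ b : Bool,
              A.eval (Function.update (fun x => if x ∈ A.letters then w x else v x) p b) = true := by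
            intro b
            rw [letters_update_congr A p hpA _ w (fun x hx => by simp [hx])]
            exact hw
          have hBe : ∀ b : Bool,
              B.eval (Function.update (fun x => if x ∈ A.letters then w x else v x) p b)
                = B.eval (Function.update v p b) := by
            intro b
            apply eval_congr
            intro x hx
            by_cases hxp : x = p
            · subst hxp; simp
            · have : x ∉ A.letters := Multiset.disjoint_left.mp hdis.symm hx
              simp [Function.update_of_ne hxp, this]
          simp only [Form.eval, hAe, hBe, Bool.true_and]
          exact hv
  | or A B ihA ihB =>
      obtain ⟨hdA, hdB, hdis⟩ := div_or_left hd
      rw [Form.letters, Multiset.mem_add] at hp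
      cases hp with
      | inl hp =>
          obtain ⟨v, hv⟩ := ihA hA.1 hnr.1 hdA hp
          obtain ⟨w, hw⟩ := existsEval B hA.2 hnr.2 hdB false
          have hpB : p ∉ B.letters := Multiset.disjoint_left.mp hdis hp
          refine ⟨fun x => if x ∈ B.letters then w x else v x, ?_⟩
          have hB : ∀ b : Bool,
              B.eval (Function.update (fun x => if x ∈ B.letters then w x else v x) p b) = false := by
            intro b
            rw [letters_update_congr B p hpB _ w (fun x hx => by simp [hx])]
            exact hw
          have hAe : ∀ b : Bool,
              A.eval (Function.update (fun x => if x ∈ B.letters then w x else v x) p b)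
                = A.eval (Function.update v p b) := by
            intro b
            apply eval_congr
            intro x hx
            by_cases hxp : x = p
            · subst hxp; simp
            · have : x ∉ B.letters := Multiset.disjoint_left.mp hdis hx
              simp [Function.update_of_ne hxp, this]
          simp only [Form.eval, hB, hAe, Bool.or_false]
          exact hv
      | inr hp =>
          obtain ⟨v, hv⟩ := ihB hA.2 hnr.2 hdB hp
          obtain ⟨w, hw⟩ := existsEval A hA.1 hnr.1 hdA false
          have hpA : p ∉ A.letters := Multiset.disjoint_left.mp hdis.symm hp
          refine ⟨fun x => if x ∈ A.letters then w x else v x, ?_⟩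
          have hAe : ∀ b : Bool,
              A.eval (Function.update (fun x => if x ∈ A.letters then w x else v x) p b) = false := by
            intro b
            rw [letters_update_congr A p hpA _ w (fun x hx => by simp [hx])]
            exact hw
          have hBe : ∀ b : Bool,
              B.eval (Function.update (fun x => if x ∈ A.letters then w x else v x) p b)
                = B.eval (Function.update v p b) := by
            intro b
            apply eval_congr
            intro x hx
            by_cases hxp : x = p
            · subst hxp; simp
            · have : x ∉ A.letters := Multiset.disjoint_left.mp hdis.symm hx
              simp [Function.update_of_ne hxp, this]
          simp only [Form.eval, hAe, hBe, Bool.false_or]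
          exact hv

lemma pos_not_neg {A : Form} (hd : Diversified A) {p : ℕ} (hp : p ∈ posL A) :
    p ∉ negL A := by
  intro hn
  have := hd
  rw [Diversified, letters_eq, Multiset.nodup_add] at this
  exact Multiset.disjoint_left.mp this.2.2 hp hn

lemma key (A B : Form) (hA : IsNAO A) (hB : IsNAO B)
    (hnrA : NegReduced A) (hnrB : NegReduced B)
    (hdA : Diversified A) (hdB : Diversified B)
    (h : TautEquiv A B) (p : ℕ) : ¬ (p ∈ posL A ∧ p ∈ negL B) := by
  rintro ⟨hpA, hpB⟩
  have hpl : p ∈ A.letters := by rw [letters_eq]; exact Multiset.mem_add.mpr (Or.inl hpA)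
  obtain ⟨v, hv⟩ := relevant A hA hnrA hdA p hpl
  have hmA := (mono p A).1 (pos_not_neg hdA hpA) v
  have hf : A.eval (Function.update v p false) = false := by
    cases hft : A.eval (Function.update v p false) <;>
      cases htt : A.eval (Function.update v p true) <;> simp_all <;>
      exact absurd hmA (by decide)
  have ht : A.eval (Function.update v p true) = true := by
    cases hft : A.eval (Function.update v p false) <;>
      cases htt : A.eval (Function.update v p true) <;> simp_all <;>
      exact absurd hmA (by decide)
  have hnB : p ∉ posL B := fun hx => pos_not_neg hdB hx hpB
  have hmB := (mono p B).2 hnB v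
  rw [h] at hf ht
  simp only [hf, ht] at hmB
  exact absurd hmB (by decide)

theorem stmt7 (A B : Form) (hA : IsNAO A) (hB : IsNAO B)
    (hnrA : NegReduced A) (hnrB : NegReduced B)
    (hdA : Diversified A) (hdB : Diversified B)
    (h : TautEquiv A B) :
    ∀ p : ℕ, ¬ (p ∈ posL A ∧ p ∈ negL B) ∧ ¬ (p ∈ negL A ∧ p ∈ posL B) := by
  intro p
  refine ⟨key A B hA hB hnrA hnrB hdA hdB h p, ?_⟩
  rintro ⟨h1, h2⟩
  exact key B A hB hA hnrB hnrA hdB hdA (fun v => (h v).symm) p ⟨h2, h1⟩
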